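/- arXiv:2006.08549 — 4 statements merged into one kernel-verified Lean document; each statement's English description precedes it below -/
import Mathlib

section
/- Suppose the Patankar-modified two-stage RK scheme has modification factors of the form χ_k^(1) = 1 + X_k Δt + O(Δt²) and χ_k^(2) = 1 + Y_k Δt + O(Δt²), where the unmodified RK coefficients satisfy the second-order conditions α20+α21 = 1, α21 β10 + β20 + β21 = 1, β10 β21 = 1/2. Then the modified scheme retains second-order accuracy if and only if α21 β10 X_k + (β20 + β21) Y_k = 0 for every reaction k. -/
open Filter Asymptotics

lemma step_bigO {G G' : ℝ → ℝ} (hd : ∀ x, HasDerivAt G (G' x) x) (h0 : G 0 = 0)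
    {n : ℕ} (hO : G' =O[nhds 0] fun x => x ^ n) : G =O[nhds 0] (fun x => x ^ (n+1)) := by
  rcases hO.exists_nonneg with ⟨C, hC0, hC⟩
  rw [isBigOWith_iff] at hC
  rcases Metric.eventually_nhds_iff.mp hC with ⟨δ, hδ, hball⟩
  rw [isBigO_iff]
  refine ⟨C, Metric.eventually_nhds_iff.mpr ⟨δ, hδ, fun {x} hx => ?_⟩⟩
  simp only [Real.dist_eq, sub_zero] at hx
  have key : ∀ s, |s| ≤ |x| → ‖G' s‖ ≤ C * |x| ^ n := by
    intro s hs
    have h1 : ‖G' s‖ ≤ C * ‖s ^ n‖ := by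
      apply hball
      simp only [Real.dist_eq, sub_zero]
      exact lt_of_le_of_lt hs hx
    refine h1.trans ?_
    rw [norm_pow, Real.norm_eq_abs]
    exact mul_le_mul_of_nonneg_left (pow_le_pow_left₀ (abs_nonneg s) hs n) hC0
  have hxabs : ‖x ^ (n+1)‖ = |x| ^ n * |x| := by
    rw [norm_pow, Real.norm_eq_abs, pow_succ]
  rcases le_or_gt 0 x with hx0 | hx0
  · have := norm_image_sub_le_of_norm_deriv_le_segment' (f := G) (f' := G')
      (a := 0) (b := x) (C := C * |x| ^ n)
      (fun s hs => (hd s).hasDerivWithinAt)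
      (fun s hs => key s (by
        rw [abs_of_nonneg hs.1, abs_of_nonneg hx0]; exact le_of_lt hs.2))
      x (Set.right_mem_Icc.2 hx0)
    rw [h0, sub_zero, sub_zero] at this
    rw [hxabs]
    calc ‖G x‖ ≤ C * |x| ^ n * x := this
      _ ≤ C * (|x| ^ n * |x|) := by
          rw [mul_assoc]
          exact mul_le_mul_of_nonneg_left (by
            exact mul_le_mul_of_nonneg_left (le_abs_self x) (by positivity)) hC0
  · have := norm_image_sub_le_of_norm_deriv_le_segment' (f := G) (f' := G')
      (a := x) (b := 0) (C := C * |x| ^ n)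
      (fun s hs => (hd s).hasDerivWithinAt)
      (fun s hs => key s (by
        rw [abs_of_nonpos (le_of_lt hs.2), abs_of_neg hx0]
        linarith [hs.1]))
      0 (Set.right_mem_Icc.2 (le_of_lt hx0))
    rw [h0, zero_sub, norm_neg, zero_sub] at this
    rw [hxabs]
    calc ‖G x‖ ≤ C * |x| ^ n * -x := this
      _ = C * (|x| ^ n * |x|) := by rw [abs_of_neg hx0]; ring

lemma cube_bigO {F : ℝ → ℝ} (hF : ContDiff ℝ ((⊤ : ℕ∞) : WithTop ℕ∞) F) (e0 : F 0 = 0)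
    (e1 : deriv F 0 = 0) (e2 : deriv (deriv F) 0 = 0) :
    F =O[nhds 0] (fun x => x ^ 3) := by
  obtain ⟨hd1, hF1⟩ := contDiff_infty_iff_deriv.mp hF
  obtain ⟨hd2, hF2⟩ := contDiff_infty_iff_deriv.mp hF1
  have hd3 : Differentiable ℝ (deriv (deriv F)) := (contDiff_infty_iff_deriv.mp hF2).1
  have hO1 : deriv (deriv F) =O[nhds 0] (fun x => x ^ 1) := by
    have := (hd3 0).hasDerivAt.hasFDerivAt.isBigO_sub
    simp only [e2, sub_zero] at this
    simpa [pow_one] using this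
  have hO2 : deriv F =O[nhds 0] (fun x => x ^ 2) :=
    step_bigO (fun x => (hd2 x).hasDerivAt) e1 hO1
  exact step_bigO (fun x => (hd1 x).hasDerivAt) e0 hO2

lemma ode_smooth {N K : ℕ} (R : Fin K → (Fin N → ℝ) → ℝ)
    (hR : ∀ k, ContDiff ℝ (⊤ : ℕ∞) (R k))
    (lam : Fin K → Fin N → ℝ) (c : ℝ → Fin N → ℝ)
    (hc : ∀ t, HasDerivAt c (fun i => ∑ k, R k (c t) * lam k i) t) :
    ContDiff ℝ ((⊤ : ℕ∞) : WithTop ℕ∞) c := by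
  have hf : ContDiff ℝ (⊤ : ℕ∞) (fun y : Fin N → ℝ => fun i => ∑ k, R k y * lam k i) := by
    apply contDiff_pi.mpr
    intro i
    exact ContDiff.sum fun k _ => (hR k).mul contDiff_const
  have hderiv : deriv c = fun t => fun i => ∑ k, R k (c t) * lam k i :=
    funext fun t => (hc t).deriv
  have key : ∀ n : ℕ, ContDiff ℝ (n : WithTop ℕ∞) c := by
    intro n
    induction n with
    | zero => exact contDiff_zero.mpr (continuous_iff_continuousAt.mpr fun t => (hc t).continuousAt)
    | succ n ih =>
      rw [show ((n + 1 : ℕ) : WithTop ℕ∞) = (n : WithTop ℕ∞) + 1 by push_cast; ring]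
      refine contDiff_succ_iff_deriv.mpr ⟨fun t => (hc t).differentiableAt, ?_, ?_⟩
      · intro h; simp at h
      · rw [hderiv]; exact (hf.of_le (by exact_mod_cast le_top)).comp ih
  exact contDiff_infty.mpr key

lemma const_eq_zero_of_bigO {L : ℝ}
    (h : (fun x : ℝ => L * x ^ 2) =O[nhds 0] fun x => x ^ 3) : L = 0 := by
  by_contra hL
  rcases h.exists_nonneg with ⟨C, hC0, hC⟩
  rw [isBigOWith_iff] at hC
  have hev1 : ∀ᶠ x : ℝ in nhdsWithin 0 {(0:ℝ)}ᶜ, ‖L * x ^ 2‖ ≤ C * ‖x ^ 3‖ :=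
    eventually_nhdsWithin_of_eventually_nhds hC
  have hpos : (0:ℝ) < |L| / (C + 1) := by
    have : 0 < |L| := abs_pos.mpr hL
    positivity
  have hev2 : ∀ᶠ x : ℝ in nhdsWithin 0 {(0:ℝ)}ᶜ, |x| < |L| / (C + 1) := by
    apply eventually_nhdsWithin_of_eventually_nhds
    apply Metric.eventually_nhds_iff.mpr
    exact ⟨|L| / (C+1), hpos, fun {y} hy => by simpa [Real.dist_eq] using hy⟩
  have hev3 : ∀ᶠ x : ℝ in nhdsWithin 0 {(0:ℝ)}ᶜ, x ∈ ({(0:ℝ)}ᶜ : Set ℝ) :=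
    eventually_mem_nhdsWithin
  obtain ⟨x, ⟨hb, hlt⟩, hx0⟩ := ((hev1.and hev2).and hev3).exists
  have hx0' : x ≠ 0 := by simpa using hx0
  have hx2 : (0:ℝ) < x ^ 2 := by positivity
  have hb' : |L| * x ^ 2 ≤ C * (|x| * x ^ 2) := by
    have e1 : ‖L * x ^ 2‖ = |L| * x ^ 2 := by
      rw [norm_mul, norm_pow, Real.norm_eq_abs, Real.norm_eq_abs, sq_abs]
    have e2 : ‖x ^ 3‖ = |x| * x ^ 2 := by
      rw [norm_pow, Real.norm_eq_abs]
      rw [show |x| ^ 3 = |x| * |x| ^ 2 by ring, sq_abs]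
    rw [e1, e2] at hb
    exact hb
  have hLle : |L| ≤ C * |x| := le_of_mul_le_mul_right (by linarith [hb']) hx2
  have : C * |x| < |L| := by
    have h1 : C * |x| ≤ C * (|L| / (C+1)) :=
      mul_le_mul_of_nonneg_left (le_of_lt hlt) hC0
    have h2 : C * (|L| / (C+1)) < |L| := by
      rw [div_eq_inv_mul, ← mul_assoc]
      have : C * (C+1)⁻¹ < 1 := by
        rw [mul_inv_lt_iff₀ (by linarith)]
        linarith
      nlinarith [abs_pos.mpr hL]
    linarith
  linarith

lemma mul_id_bigO {u : ℝ → ℝ} {n : ℕ} (h : u =O[nhds 0] fun x => x ^ n) :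
    (fun x => x * u x) =O[nhds 0] (fun x => x ^ (n+1)) := by
  have h2 := (isBigO_refl (fun x : ℝ => x) (nhds 0)).mul h
  exact h2.congr (fun x => rfl) (fun x => by ring)

lemma pow_bigO_pow {m n : ℕ} (h : n ≤ m) : (fun x : ℝ => x ^ m) =O[nhds 0] fun x => x ^ n := by
  apply IsBigO.of_bound 1
  have hev : ∀ᶠ x : ℝ in nhds 0, |x| ≤ 1 := Metric.eventually_nhds_iff.mpr
    ⟨1, one_pos, fun {y} hy => by simp [Real.dist_eq] at hy; linarith⟩
  filter_upwards [hev] with x hx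
  rw [norm_pow, norm_pow, Real.norm_eq_abs, one_mul]
  exact pow_le_pow_of_le_one (abs_nonneg x) hx h

lemma tendsto_zero_of_mul_bigO_one {u : ℝ → ℝ} (h : u =O[nhds 0] fun _ => (1:ℝ)) :
    Tendsto (fun x => x * u x) (nhds 0) (nhds 0) := by
  have h2 := (isBigO_refl (fun x : ℝ => x) (nhds 0)).mul h
  have h3 : (fun x => x * u x) =O[nhds 0] (fun x : ℝ => x) :=
    h2.congr (fun _ => rfl) (fun x => mul_one x)
  exact h3.trans_tendsto tendsto_id

/-- Order condition for the Patankar modification factors: given RK coefficients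
satisfying the second-order conditions, the modified scheme (with
`χ_k^(1) = 1 + X_k Δt + O(Δt²)`, `χ_k^(2) = 1 + Y_k Δt + O(Δt²)`) keeps the
local truncation error `O(Δt³)` for every production–destruction system
if and only if `α21 β10 X_k + (β20 + β21) Y_k = 0` for every reaction `k`. -/
theorem pmprk_second_order_iff (α20 α21 β10 β20 β21 : ℝ)
    (h1 : α20 + α21 = 1) (h2 : α21 * β10 + β20 + β21 = 1) (h3 : β10 * β21 = 1 / 2)
    (K : ℕ) (X Y : Fin K → ℝ) :
    (∀ (N : ℕ) (R : Fin K → (Fin N → ℝ) → ℝ), (∀ k, ContDiff ℝ (⊤ : ℕ∞) (R k)) →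
      ∀ (lam : Fin K → Fin N → ℝ) (c : ℝ → (Fin N → ℝ)),
        (∀ t : ℝ, HasDerivAt c (fun i => ∑ k, R k (c t) * lam k i) t) →
      ∀ (χ₁ χ₂ : Fin K → ℝ → ℝ),
        (∀ k, (fun Δt : ℝ => χ₁ k Δt - 1 - X k * Δt) =O[nhds 0] (fun Δt : ℝ => Δt ^ 2)) →
        (∀ k, (fun Δt : ℝ => χ₂ k Δt - 1 - Y k * Δt) =O[nhds 0] (fun Δt : ℝ => Δt ^ 2)) →
      ∀ t : ℝ,
        (fun Δt : ℝ =>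
            (fun i =>
              c (t + Δt) i -
                (α20 * c t i +
                  α21 * (c t i + Δt * β10 * ∑ k, R k (c t) * lam k i * χ₁ k Δt) +
                  Δt * ∑ k,
                    (β20 * R k (c t) +
                      β21 * R k (fun j => c t j + Δt * β10 * ∑ m, R m (c t) * lam m j * χ₁ m Δt))
                    * lam k i * χ₂ k Δt)))
          =O[nhds 0] (fun Δt : ℝ => Δt ^ 3))
    ↔ (∀ k, α21 * β10 * X k + (β20 + β21) * Y k = 0) := by
  constructor
  · intro H
    intro k0
    set R : Fin K → (Fin 1 → ℝ) → ℝ := fun k _ => if k = k0 then 1 else 0 with hRdef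
    set lam : Fin K → Fin 1 → ℝ := fun _ _ => 1 with hlamdef
    set c : ℝ → Fin 1 → ℝ := fun t _ => t with hcdef
    have hc : ∀ t : ℝ, HasDerivAt c (fun i => ∑ k, R k (c t) * lam k i) t := by
      intro t
      apply hasDerivAt_pi.mpr
      intro i
      have : (∑ k, R k (c t) * lam k i) = 1 := by
        simp [R, lam]
      rw [this]
      exact hasDerivAt_id t
    have hχ : ∀ (Z : Fin K → ℝ) (k : Fin K),
        (fun Δt : ℝ => (1 + Z k * Δt) - 1 - Z k * Δt) =O[nhds 0] (fun Δt : ℝ => Δt ^ 2) := by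
      intro Z k
      have : (fun Δt : ℝ => (1 + Z k * Δt) - 1 - Z k * Δt) = fun _ => (0:ℝ) := by
        funext Δt; ring
      rw [this]
      exact isBigO_zero _ _
    have key := H 1 R (fun k => contDiff_const) lam c hc
      (fun k Δt => 1 + X k * Δt) (fun k Δt => 1 + Y k * Δt) (hχ X) (hχ Y) 0
    rw [isBigO_pi] at key
    have key0 := key 0
    have heq : (fun Δt : ℝ =>
        c (0 + Δt) 0 -
          (α20 * c 0 0 +
            α21 * (c 0 0 + Δt * β10 * ∑ k, R k (c 0) * lam k 0 * (1 + X k * Δt)) +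
            Δt * ∑ k,
              (β20 * R k (c 0) +
                β21 * R k (fun j => c 0 j + Δt * β10 * ∑ m, R m (c 0) * lam m j * (1 + X m * Δt)))
              * lam k 0 * (1 + Y k * Δt)))
        = fun Δt : ℝ => (-(α21 * β10 * X k0 + (β20 + β21) * Y k0)) * Δt ^ 2 := by
      funext Δt
      have e1 : (∑ k, R k (c 0) * lam k 0 * (1 + X k * Δt)) = 1 + X k0 * Δt := by
        simp [R, lam]
      have e2 : (∑ k, (β20 * R k (c 0) +
          β21 * R k (fun j => c 0 j + Δt * β10 * ∑ m, R m (c 0) * lam m j * (1 + X m * Δt)))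
          * lam k 0 * (1 + Y k * Δt)) = (β20 + β21) * (1 + Y k0 * Δt) := by
        simp only [hRdef, hlamdef]
        have hs : ∀ x : Fin K, ((β20 * if x = k0 then (1:ℝ) else 0) + β21 * if x = k0 then 1 else 0) * 1 * (1 + Y x * Δt)
            = if x = k0 then (β20 + β21) * (1 + Y x * Δt) else 0 := by
          intro x; split_ifs <;> ring
        rw [Finset.sum_congr rfl fun x _ => hs x, Finset.sum_ite_eq' Finset.univ k0]
        simp
      rw [e1, e2]
      simp only [hcdef]
      linear_combination (-Δt) * h2
    rw [heq] at key0
    have := const_eq_zero_of_bigO key0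
    linarith
  · intro hcond N R hR lam c hc χ₁ χ₂ hχ₁ hχ₂ t
    classical
    have hone : (1 : WithTop ℕ∞) ≤ ((⊤ : ℕ∞) : WithTop ℕ∞) := by
      exact_mod_cast (le_top : (1:ℕ∞) ≤ ⊤)
    have hRsm : ∀ k, ContDiff ℝ ((⊤ : ℕ∞) : WithTop ℕ∞) (R k) := fun k => (hR k).of_le (by simp)
    have hRd : ∀ k, Differentiable ℝ (R k) := fun k => (hRsm k).differentiable (by simp)
    have hcsm : ContDiff ℝ ((⊤ : ℕ∞) : WithTop ℕ∞) c := ode_smooth R hR lam c hc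
    -- the stage-1 value functions
    set P : ℝ → Fin N → ℝ :=
      fun Δt j => c t j + Δt * β10 * ∑ m, R m (c t) * lam m j * (1 + X m * Δt) with hPdef
    set Pχ : ℝ → Fin N → ℝ :=
      fun Δt j => c t j + Δt * β10 * ∑ m, R m (c t) * lam m j * χ₁ m Δt with hPχdef
    set Pd : ℝ → Fin N → ℝ :=
      fun Δt j => β10 * ∑ m, R m (c t) * lam m j * (1 + 2 * X m * Δt) with hPddef
    have hP0 : P 0 = c t := by funext j; simp [hPdef]
    have hPdc : ∀ (Δt : ℝ) (j : Fin N), HasDerivAt (fun s => P s j) (Pd Δt j) Δt := by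
      intro Δt j
      have hsum : HasDerivAt (fun s : ℝ => ∑ m, R m (c t) * lam m j * (1 + X m * s))
          (∑ m, R m (c t) * lam m j * X m) Δt := by
        apply HasDerivAt.fun_sum
        intro m _
        simpa using (((hasDerivAt_id Δt).const_mul (X m)).const_add 1).const_mul
          (R m (c t) * lam m j)
      have h := (((hasDerivAt_id Δt).mul_const β10).mul hsum).const_add (c t j)
      have hval : Pd Δt j = 1 * β10 * (∑ m, R m (c t) * lam m j * (1 + X m * Δt)) +
          Δt * β10 * ∑ m, R m (c t) * lam m j * X m := by
        simp only [hPddef]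
        rw [Finset.mul_sum, Finset.mul_sum, Finset.mul_sum, ← Finset.sum_add_distrib]
        exact Finset.sum_congr rfl fun m _ => by ring
      rw [hval]
      exact h
    have hPsm : ContDiff ℝ ((⊤ : ℕ∞) : WithTop ℕ∞) P := by
      apply contDiff_pi.mpr
      intro j
      apply ContDiff.add contDiff_const
      apply ContDiff.mul (ContDiff.mul contDiff_id contDiff_const)
      apply ContDiff.sum
      intro m _
      exact ContDiff.mul contDiff_const (ContDiff.add contDiff_const
        (ContDiff.mul contDiff_const contDiff_id))
    -- the sensitivities s k
    set sk : Fin K → ℝ :=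
      fun k => (fderiv ℝ (R k) (c t)) (fun j => ∑ m, R m (c t) * lam m j) with hskdef
    -- derivative of stage-1 composed with R k, at 0
    have hgd0 : ∀ k, HasDerivAt (fun Δt => R k (P Δt)) (β10 * sk k) 0 := by
      intro k
      have hPv : HasDerivAt P (Pd 0) 0 := hasDerivAt_pi.mpr (fun j => hPdc 0 j)
      have hfR : HasFDerivAt (R k) (fderiv ℝ (R k) (c t)) (P 0) := by
        rw [hP0]; exact (hRd k (c t)).hasFDerivAt
      have h := hfR.comp_hasDerivAt 0 hPv
      have hPd0 : Pd 0 = β10 • (fun j => ∑ m, R m (c t) * lam m j) := by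
        funext j; simp [hPddef, Finset.mul_sum]
      rw [hPd0, ContinuousLinearMap.map_smul] at h
      simpa [hskdef, Function.comp_def] using h
    -- boundedness of χ₁
    have hχ1O : ∀ m, (fun Δt : ℝ => χ₁ m Δt) =O[nhds 0] (fun _ : ℝ => (1:ℝ)) := by
      intro m
      have hsq : (fun x : ℝ => x ^ 2) =O[nhds 0] (fun _ : ℝ => (1:ℝ)) :=
        (pow_bigO_pow (Nat.zero_le 2)).congr (fun _ => rfl) (fun x => pow_zero x)
      have hlin : (fun Δt : ℝ => 1 + X m * Δt) =O[nhds 0] (fun _ : ℝ => (1:ℝ)) := by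
        have ht : Tendsto (fun Δt : ℝ => 1 + X m * Δt) (nhds 0) (nhds (1 + X m * 0)) :=
          ((tendsto_id.const_mul (X m)).const_add 1)
        exact ht.isBigO_one (F := ℝ)
      exact (((hχ₁ m).trans hsq).add hlin).congr_left (fun Δt => by ring)
    -- Pχ tends to c t
    have hPχtend : Tendsto Pχ (nhds 0) (nhds (c t)) := by
      rw [tendsto_pi_nhds]
      intro j
      have hsumO : (fun Δt : ℝ => β10 * ∑ m, R m (c t) * lam m j * χ₁ m Δt)
          =O[nhds 0] (fun _ : ℝ => (1:ℝ)) := by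
        apply IsBigO.const_mul_left
        exact IsBigO.fun_sum fun m _ => (hχ1O m).const_mul_left (R m (c t) * lam m j)
      have hmul : Tendsto (fun Δt : ℝ => Δt * (β10 * ∑ m, R m (c t) * lam m j * χ₁ m Δt))
          (nhds 0) (nhds 0) := tendsto_zero_of_mul_bigO_one hsumO
      have h4 := hmul.const_add (c t j)
      rw [add_zero] at h4
      refine h4.congr fun Δt => ?_
      simp only [hPχdef]
      ring
    have hPtend : Tendsto P (nhds 0) (nhds (c t)) := by
      have := hPsm.continuous.tendsto 0
      rwa [hP0] at this
    have hPχsubO : (fun Δt => Pχ Δt - P Δt) =O[nhds 0] (fun Δt : ℝ => Δt ^ 2) := by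
      rw [isBigO_pi]
      intro j
      have hsumO : (fun Δt : ℝ => β10 * ∑ m, R m (c t) * lam m j * (χ₁ m Δt - (1 + X m * Δt)))
          =O[nhds 0] (fun Δt : ℝ => Δt ^ 2) := by
        apply IsBigO.const_mul_left
        exact IsBigO.fun_sum fun m _ =>
          (((hχ₁ m).congr_left fun Δt => by ring).const_mul_left (R m (c t) * lam m j))
      have h5 := mul_id_bigO hsumO
      have h6 := h5.trans (pow_bigO_pow (by norm_num : 2 ≤ 2 + 1))
      refine h6.congr_left fun Δt => ?_
      show Δt * (β10 * ∑ m, R m (c t) * lam m j * (χ₁ m Δt - (1 + X m * Δt))) = (Pχ Δt - P Δt) j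
      simp only [hPχdef, hPdef, Pi.sub_apply]
      rw [show (∑ m, R m (c t) * lam m j * (χ₁ m Δt - (1 + X m * Δt)))
          = (∑ m, R m (c t) * lam m j * χ₁ m Δt) - ∑ m, R m (c t) * lam m j * (1 + X m * Δt) by
        rw [← Finset.sum_sub_distrib]; exact Finset.sum_congr rfl fun m _ => by ring]
      ring
    have hRPdiffO : ∀ k, (fun Δt => R k (Pχ Δt) - R k (P Δt)) =O[nhds 0] (fun Δt : ℝ => Δt ^ 2) := by
      intro k
      obtain ⟨Kl, U, hU, hlip⟩ :=
        ((hR k).of_le (by simp) : ContDiff ℝ 1 (R k)).contDiffAt.exists_lipschitzOnWith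
          (x := c t)
      have hb : (fun Δt => R k (Pχ Δt) - R k (P Δt)) =O[nhds 0] (fun Δt => Pχ Δt - P Δt) := by
        apply IsBigO.of_bound Kl
        filter_upwards [hPχtend.eventually_mem hU, hPtend.eventually_mem hU] with Δt hx hy
        have hd := hlip.dist_le_mul _ hx _ hy
        rw [dist_eq_norm, dist_eq_norm] at hd
        exact hd
      exact hb.trans hPχsubO
    have hRPχtend : ∀ k, Tendsto (fun Δt => R k (Pχ Δt)) (nhds 0) (nhds (R k (c t))) :=
      fun k => ((hRsm k).continuous.tendsto (c t)).comp hPχtend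
    rw [isBigO_pi]
    intro i
    set ψ : ℝ → ℝ :=
      fun Δt => ∑ k, (β20 * R k (c t) + β21 * R k (P Δt)) * lam k i * (1 + Y k * Δt) with hψdef
    have hψsm : ContDiff ℝ ((⊤ : ℕ∞) : WithTop ℕ∞) ψ := by
      rw [hψdef]
      apply ContDiff.sum
      intro k _
      refine ContDiff.mul (ContDiff.mul ?_ contDiff_const) ?_
      · exact contDiff_const.add (contDiff_const.mul ((hRsm k).comp hPsm))
      · exact contDiff_const.add (contDiff_const.mul contDiff_id)
    set ψ' : ℝ → ℝ := deriv ψ with hψ'def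
    have hψder : ∀ Δt, HasDerivAt ψ (ψ' Δt) Δt :=
      fun Δt => (hψsm.differentiable (by simp) Δt).hasDerivAt
    have hψ'sm : ContDiff ℝ ((⊤ : ℕ∞) : WithTop ℕ∞) ψ' := by
      rw [hψ'def]
      exact (contDiff_infty_iff_deriv.mp hψsm).2
    have hψd0 : HasDerivAt ψ (∑ k, (β21 * (β10 * sk k) * lam k i * (1 + Y k * 0) +
        (β20 * R k (c t) + β21 * R k (P 0)) * lam k i * Y k)) 0 := by
      rw [hψdef]
      apply HasDerivAt.fun_sum
      intro k _
      have hu : HasDerivAt (fun Δt => (β20 * R k (c t) + β21 * R k (P Δt)) * lam k i)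
          (β21 * (β10 * sk k) * lam k i) 0 :=
        (((hgd0 k).const_mul β21).const_add (β20 * R k (c t))).mul_const (lam k i)
      have hv : HasDerivAt (fun Δt : ℝ => 1 + Y k * Δt) (Y k) 0 := by
        simpa using ((hasDerivAt_id (0:ℝ)).const_mul (Y k)).const_add 1
      exact hu.mul hv
    have hψ'0 : ψ' 0 = β21 * β10 * (∑ k, sk k * lam k i) +
        (β20 + β21) * ∑ k, R k (c t) * lam k i * Y k := by
      have h7 := hψd0.deriv
      rw [hψ'def, h7, hP0]
      rw [Finset.mul_sum, Finset.mul_sum, ← Finset.sum_add_distrib]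
      exact Finset.sum_congr rfl fun k _ => by ring
    have hcv : ∀ Δt : ℝ, HasDerivAt (fun s => c (t + s))
        (fun j => ∑ m, R m (c (t + Δt)) * lam m j) Δt := by
      intro Δt
      have h := HasDerivAt.scomp (x := Δt) (hc (t + Δt)) ((hasDerivAt_id Δt).const_add t)
      simpa [Function.comp_def] using h
    have hccd : ∀ Δt : ℝ, HasDerivAt (fun s => c (t + s) i)
        (∑ m, R m (c (t + Δt)) * lam m i) Δt :=
      fun Δt => (hasDerivAt_pi.mp (hcv Δt)) i
    have hAder : ∀ Δt : ℝ, HasDerivAt (fun s => α20 * c t i + α21 * P s i + s * ψ s)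
        (α21 * Pd Δt i + (1 * ψ Δt + Δt * ψ' Δt)) Δt := by
      intro Δt
      exact (((hPdc Δt i).const_mul α21).const_add (α20 * c t i)).add
        ((hasDerivAt_id Δt).mul (hψder Δt))
    have hFder : ∀ Δt : ℝ, HasDerivAt
        (fun s => c (t + s) i - (α20 * c t i + α21 * P s i + s * ψ s))
        ((∑ m, R m (c (t + Δt)) * lam m i) - (α21 * Pd Δt i + (1 * ψ Δt + Δt * ψ' Δt))) Δt :=
      fun Δt => (hccd Δt).sub (hAder Δt)
    have hderivF : deriv (fun s => c (t + s) i - (α20 * c t i + α21 * P s i + s * ψ s))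
        = fun Δt => (∑ m, R m (c (t + Δt)) * lam m i) -
          (α21 * Pd Δt i + (1 * ψ Δt + Δt * ψ' Δt)) :=
      funext fun Δt => (hFder Δt).deriv
    have hcc : ContDiff ℝ ((⊤ : ℕ∞) : WithTop ℕ∞) (fun s : ℝ => c (t + s) i) := by
      have h8 : ContDiff ℝ ((⊤ : ℕ∞) : WithTop ℕ∞) (fun s : ℝ => c (t + s)) :=
        hcsm.comp (contDiff_const.add contDiff_id)
      exact (contDiff_pi.mp h8) i
    have hFsm : ContDiff ℝ ((⊤ : ℕ∞) : WithTop ℕ∞)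
        (fun s => c (t + s) i - (α20 * c t i + α21 * P s i + s * ψ s)) := by
      apply hcc.sub
      apply ContDiff.add
      · exact contDiff_const.add (contDiff_const.mul ((contDiff_pi.mp hPsm) i))
      · exact contDiff_id.mul hψsm
    have e0 : c (t + 0) i - (α20 * c t i + α21 * P 0 i + 0 * ψ 0) = 0 := by
      have : P 0 i = c t i := by rw [hP0]
      rw [this, add_zero]
      linear_combination (-(c t i)) * h1
    have e1 : (∑ m, R m (c (t + 0)) * lam m i) - (α21 * Pd 0 i + (1 * ψ 0 + 0 * ψ' 0)) = 0 := by
      have hψ0 : ψ 0 = (β20 + β21) * ∑ k, R k (c t) * lam k i := by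
        rw [hψdef]
        simp only [hP0]
        rw [Finset.mul_sum]
        exact Finset.sum_congr rfl fun k _ => by ring
      have hPd0i : Pd 0 i = β10 * ∑ m, R m (c t) * lam m i := by
        simp only [hPddef]
        congr 1
        exact Finset.sum_congr rfl fun m _ => by ring
      rw [add_zero, hψ0, hPd0i]
      linear_combination (-(∑ m, R m (c t) * lam m i)) * h2
    have hdd0 : HasDerivAt (fun Δt => (∑ m, R m (c (t + Δt)) * lam m i) -
        (α21 * Pd Δt i + (1 * ψ Δt + Δt * ψ' Δt)))
        ((∑ m, sk m * lam m i) - (α21 * (β10 * (2 * ∑ m, R m (c t) * lam m i * X m)) +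
          (1 * ψ' 0 + (1 * ψ' 0 + 0 * deriv ψ' 0)))) 0 := by
      apply HasDerivAt.sub
      · apply HasDerivAt.fun_sum
        intro m _
        have hcv0 : HasDerivAt (fun s => c (t + s)) (fun j => ∑ n', R n' (c t) * lam n' j) 0 := by
          have h10 := hcv 0
          rwa [add_zero] at h10
        have hfR : HasFDerivAt (R m) (fderiv ℝ (R m) (c t)) (c (t + 0)) := by
          rw [add_zero]; exact (hRd m (c t)).hasFDerivAt
        exact (hfR.comp_hasDerivAt 0 hcv0).mul_const (lam m i)
      · apply HasDerivAt.add
        · have hsum2 : HasDerivAt (fun Δt : ℝ => ∑ m, R m (c t) * lam m i * (1 + 2 * X m * Δt))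
              (2 * ∑ m, R m (c t) * lam m i * X m) 0 := by
            have h11 := HasDerivAt.fun_sum (u := Finset.univ) (x := (0:ℝ))
              (fun m _ => (((hasDerivAt_id (0:ℝ)).const_mul (2 * X m)).const_add 1).const_mul
                (R m (c t) * lam m i))
            refine h11.congr_deriv ?_
            rw [Finset.mul_sum]
            exact Finset.sum_congr rfl fun m _ => by ring
          exact (hsum2.const_mul β10).const_mul α21
        · have hψ'd : DifferentiableAt ℝ ψ' 0 := (hψ'sm.differentiable (by simp)) 0
          exact ((hψder 0).const_mul 1).add ((hasDerivAt_id 0).mul hψ'd.hasDerivAt)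
    have e2 : (∑ m, sk m * lam m i) - (α21 * (β10 * (2 * ∑ m, R m (c t) * lam m i * X m)) +
        (1 * ψ' 0 + (1 * ψ' 0 + 0 * deriv ψ' 0))) = 0 := by
      rw [hψ'0]
      have hzero : α21 * β10 * (∑ k, R k (c t) * lam k i * X k) +
          (β20 + β21) * (∑ k, R k (c t) * lam k i * Y k) = 0 := by
        rw [Finset.mul_sum, Finset.mul_sum, ← Finset.sum_add_distrib]
        apply Finset.sum_eq_zero
        intro k _
        linear_combination (R k (c t) * lam k i) * hcond k
      linear_combination (-2 * (∑ m, sk m * lam m i)) * h3 + (-2) * hzero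
    have hFO : (fun s => c (t + s) i - (α20 * c t i + α21 * P s i + s * ψ s))
        =O[nhds 0] (fun x : ℝ => x ^ 3) := by
      apply cube_bigO hFsm e0
      · rw [hderivF]; exact e1
      · rw [hderivF, hdd0.deriv]; exact e2
    -- the χ-correction part
    have hl2O : ∀ k, (fun Δt : ℝ => 1 + Y k * Δt) =O[nhds 0] (fun _ : ℝ => (1:ℝ)) := by
      intro k
      have ht : Tendsto (fun Δt : ℝ => 1 + Y k * Δt) (nhds 0) (nhds (1 + Y k * 0)) :=
        ((tendsto_id.const_mul (Y k)).const_add 1)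
      exact ht.isBigO_one (F := ℝ)
    have hqO : ∀ k, (fun Δt : ℝ => (β20 * R k (c t) + β21 * R k (Pχ Δt)) * lam k i)
        =O[nhds 0] (fun _ : ℝ => (1:ℝ)) := by
      intro k
      have ht : Tendsto (fun Δt : ℝ => (β20 * R k (c t) + β21 * R k (Pχ Δt)) * lam k i) (nhds 0)
          (nhds ((β20 * R k (c t) + β21 * (R k (c t))) * lam k i)) :=
        (((hRPχtend k).const_mul β21).const_add (β20 * R k (c t))).mul_const (lam k i)
      exact ht.isBigO_one (F := ℝ)
    have hdkO : ∀ k, (fun Δt : ℝ =>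
        -(α21 * β10) * (R k (c t) * lam k i) * (χ₁ k Δt - (1 + X k * Δt))
        - (β20 * R k (c t) + β21 * R k (Pχ Δt)) * lam k i * (χ₂ k Δt - (1 + Y k * Δt))
        - β21 * (R k (Pχ Δt) - R k (P Δt)) * lam k i * (1 + Y k * Δt))
        =O[nhds 0] (fun Δt : ℝ => Δt ^ 2) := by
      intro k
      have hA := (hχ₁ k).const_mul_left (-(α21 * β10) * (R k (c t) * lam k i))
      have hB := ((hqO k).mul (hχ₂ k)).congr_right fun x => one_mul _
      have hC := (((hRPdiffO k).mul (hl2O k)).congr_right fun x => mul_one _).const_mul_left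
        (β21 * lam k i)
      exact ((hA.sub hB).sub hC).congr_left fun Δt => by ring
    have hDO : (fun Δt : ℝ => Δt * ∑ k,
        (-(α21 * β10) * (R k (c t) * lam k i) * (χ₁ k Δt - (1 + X k * Δt))
        - (β20 * R k (c t) + β21 * R k (Pχ Δt)) * lam k i * (χ₂ k Δt - (1 + Y k * Δt))
        - β21 * (R k (Pχ Δt) - R k (P Δt)) * lam k i * (1 + Y k * Δt)))
        =O[nhds 0] (fun Δt : ℝ => Δt ^ 3) :=
      mul_id_bigO (IsBigO.fun_sum fun k _ => hdkO k)
    have final := hFO.add hDO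
    refine final.congr_left fun Δt => ?_
    have hkey : (∑ k,
        (-(α21 * β10) * (R k (c t) * lam k i) * (χ₁ k Δt - (1 + X k * Δt))
        - (β20 * R k (c t) + β21 * R k (Pχ Δt)) * lam k i * (χ₂ k Δt - (1 + Y k * Δt))
        - β21 * (R k (Pχ Δt) - R k (P Δt)) * lam k i * (1 + Y k * Δt)))
        = α21 * β10 * ((∑ k, R k (c t) * lam k i * (1 + X k * Δt)) -
            ∑ k, R k (c t) * lam k i * χ₁ k Δt) +
          ((∑ k, (β20 * R k (c t) + β21 * R k (P Δt)) * lam k i * (1 + Y k * Δt)) -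
            ∑ k, (β20 * R k (c t) + β21 * R k (Pχ Δt)) * lam k i * χ₂ k Δt) := by
      rw [← Finset.sum_sub_distrib, ← Finset.sum_sub_distrib, Finset.mul_sum,
        ← Finset.sum_add_distrib]
      exact Finset.sum_congr rfl fun k _ => by ring
    rw [hkey]
    simp only [hψdef, hPdef, hPχdef]
    ring
end

section
/- Let 𝕄 ∈ ℝ^{N×N} satisfy 𝕄_{ii} ≥ 0, 𝕄_{ij} ≤ 0 for i ≠ j, and column diagonal dominance 𝕄_{ii} ≥ Σ_{j≠i} |𝕄_{ji}| for all i (an M-matrix structure). Write 𝕄 = 𝔻 − ℝ with 𝔻 its diagonal part and ℝ ≥ 0. Then for every ε > 0, the spectral radius of (ε I + 𝔻)^{-1} ℝ is strictly less than 1. -/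
/-!
With `d k = ε + 𝕄 k k`, one has `μ • 1 - (diagonal d)⁻¹ ℝ = (diagonal d)⁻¹ (μ • diagonal d - ℝ)`.
Since `ℝ` has zero diagonal, its `k`-th column has absolute sum `∑_{j ≠ k} |𝕄 j k| ≤ 𝕄 k k < d k`,
so for `‖μ‖ ≥ 1` the matrix `μ • diagonal d - ℝ` is strictly column diagonally dominant, hence
invertible (Lévy–Desplanques), and `μ` is not in the spectrum.
-/

open Matrix

namespace Matrix

variable {n : Type*} [Fintype n] [DecidableEq n]

theorem map_nonsing_inv {R S : Type*} [CommRing R] [CommRing S] (f : R →+* S)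
    {A : Matrix n n R} (hA : IsUnit A.det) : A⁻¹.map f = (A.map f)⁻¹ :=
  (inv_eq_left_inv (by
    rw [← Matrix.map_mul, nonsing_inv_mul A hA, Matrix.map_one _ f.map_zero f.map_one])).symm

theorem sum_abs_diagonal_diag_sub_apply {α : Type*} [AddCommGroup α] [Lattice α]
    [AddLeftMono α] (M : Matrix n n α) (k : n) :
    ∑ i, |(diagonal (fun i => M i i) - M) i k| = ∑ i ∈ Finset.univ.filter (· ≠ k), |M i k| := by
  rw [Finset.filter_ne', ← Finset.add_sum_erase _ _ (Finset.mem_univ k), sub_apply,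
    diagonal_apply_eq, sub_self, abs_zero, zero_add]
  refine Finset.sum_congr rfl fun i hi => ?_
  rw [sub_apply, diagonal_apply_ne _ (Finset.ne_of_mem_erase hi), zero_sub, abs_neg]

variable {K : Type*} [NormedField K] {d : n → K} {B : Matrix n n K}

theorem isUnit_smul_diagonal_sub_of_sum_col_lt (h : ∀ k, ∑ i, ‖B i k‖ < ‖d k‖) {μ : K}
    (hμ : 1 ≤ ‖μ‖) : IsUnit (μ • diagonal d - B) := by
  refine (isUnit_iff_isUnit_det _).2 (det_ne_zero_of_sum_col_lt_diag fun k => ?_).isUnit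
  have hoff : ∀ i ∈ Finset.univ.erase k, ‖(μ • diagonal d - B) i k‖ = ‖B i k‖ := fun i hi => by
    rw [sub_apply, smul_apply, diagonal_apply_ne _ (Finset.ne_of_mem_erase hi), smul_zero,
      zero_sub, norm_neg]
  have hsplit := Finset.add_sum_erase Finset.univ (fun i => ‖B i k‖) (Finset.mem_univ k)
  calc ∑ i ∈ Finset.univ.erase k, ‖(μ • diagonal d - B) i k‖
      = ∑ i ∈ Finset.univ.erase k, ‖B i k‖ := Finset.sum_congr rfl hoff
    _ < ‖d k‖ - ‖B k k‖ := by linarith [h k]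
    _ ≤ ‖μ‖ * ‖d k‖ - ‖B k k‖ := by gcongr; exact le_mul_of_one_le_left (norm_nonneg _) hμ
    _ ≤ ‖(μ • diagonal d - B) k k‖ := by
      rw [sub_apply, smul_apply, diagonal_apply_eq, smul_eq_mul, ← norm_mul]
      exact norm_sub_norm_le _ _

theorem norm_lt_one_of_mem_spectrum_diagonal_inv_mul (h : ∀ k, ∑ i, ‖B i k‖ < ‖d k‖) {μ : K}
    (hμ : μ ∈ spectrum K ((diagonal d)⁻¹ * B)) : ‖μ‖ < 1 := by
  have hd : IsUnit (diagonal d).det := (isUnit_iff_isUnit_det _).1 <| isUnit_diagonal.2 <|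
    Pi.isUnit_iff.2 fun k =>
      (norm_pos_iff.1 ((Finset.sum_nonneg fun i _ => norm_nonneg _).trans_lt (h k))).isUnit
  by_contra! hμ1
  refine spectrum.mem_iff.1 hμ ?_
  have hfactor :
      algebraMap K _ μ - (diagonal d)⁻¹ * B = (diagonal d)⁻¹ * (μ • diagonal d - B) := by
    rw [mul_sub, mul_smul_comm, nonsing_inv_mul _ hd, Algebra.algebraMap_eq_smul_one]
  rw [hfactor]
  exact ((isUnit_iff_isUnit_det _).2 (isUnit_nonsing_inv_det _ hd)).mul
    (isUnit_smul_diagonal_sub_of_sum_col_lt h hμ1)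

end Matrix

theorem jacobi_spectral_radius_lt_one_general (N : ℕ) (M : Matrix (Fin N) (Fin N) ℝ)
    (hdom : ∀ i, ∑ j ∈ Finset.univ.filter (fun j => j ≠ i), |M j i| ≤ M i i)
    (ε : ℝ) (hε : 0 < ε) :
    ∀ μ : ℂ,
      μ ∈ spectrum ℂ
        ((((ε • (1 : Matrix (Fin N) (Fin N) ℝ) + Matrix.diagonal fun i => M i i)⁻¹ *
            (Matrix.diagonal (fun i => M i i) - M)).map (Complex.ofReal))) →
      ‖μ‖ < 1 := by
  intro μ hμ
  set R := diagonal (fun i => M i i) - M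
  have hcol : ∀ k, ∑ i, |R i k| < ε + M k k := fun k => by
    rw [sum_abs_diagonal_diag_sub_apply]
    linarith [hdom k]
  have hD : ε • (1 : Matrix (Fin N) (Fin N) ℝ) + diagonal (fun i => M i i)
      = diagonal fun i => ε + M i i := by
    rw [smul_one_eq_diagonal, diagonal_add]
  have hdet : IsUnit (diagonal fun i => ε + M i i).det := by
    rw [det_diagonal, isUnit_iff_ne_zero, Finset.prod_ne_zero_iff]
    exact fun k _ => ((Finset.sum_nonneg fun i _ => abs_nonneg _).trans_lt (hcol k)).ne'
  rw [show (Complex.ofReal : ℝ → ℂ) = Complex.ofRealHom from rfl, Matrix.map_mul, hD,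
    map_nonsing_inv Complex.ofRealHom hdet, diagonal_map (map_zero Complex.ofRealHom)] at hμ
  refine norm_lt_one_of_mem_spectrum_diagonal_inv_mul (fun k => ?_) hμ
  simp only [map_apply, Complex.ofRealHom_eq_coe, Complex.norm_real, Real.norm_eq_abs]
  exact (hcol k).trans_le (le_abs_self _)

/-- For a column diagonally dominant M-matrix `𝕄 = 𝔻 − ℝ` (diagonal `𝔻 ≥ 0`,
off-diagonal nonpositive), the spectral radius of `(εI + 𝔻)⁻¹ ℝ` is strictly
less than `1` for every `ε > 0`: every complex eigenvalue has modulus `< 1`. -/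
theorem jacobi_spectral_radius_lt_one (N : ℕ) (M : Matrix (Fin N) (Fin N) ℝ)
    (hdiag : ∀ i, 0 ≤ M i i)
    (hoff : ∀ i j, i ≠ j → M i j ≤ 0)
    (hdom : ∀ i, ∑ j ∈ Finset.univ.filter (fun j => j ≠ i), |M j i| ≤ M i i)
    (ε : ℝ) (hε : 0 < ε) :
    ∀ μ : ℂ,
      μ ∈ spectrum ℂ
        ((((ε • (1 : Matrix (Fin N) (Fin N) ℝ) + Matrix.diagonal fun i => M i i)⁻¹ *
            (Matrix.diagonal (fun i => M i i) - M)).map (Complex.ofReal))) →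
      ‖μ‖ < 1 :=
  jacobi_spectral_radius_lt_one_general N M hdom ε hε
end

section
/- Single-reactant Patankar system positivity: assume every reaction k has exactly one reactant, so the system reads v_i^{1/q_i} + Σ_j 𝕄_{ij} v_j = a_i (i = 1,…,N), where a_i > 0, q_i > 0, 𝕄 has nonnegative diagonal, nonpositive off-diagonal entries, and is column diagonally dominant (𝕄_{ii} ≥ Σ_{j≠i} |𝕄_{ji}|). Then this system has a solution with all v_i > 0, and this positive solution is unique. -/
/-!
Uniqueness is an `ℓ¹`-contraction argument: for two positive solutions `x`, `y`, multiply the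
difference of the `i`-th equations by `sign (xᵢ - yᵢ)` and sum. The nonlinear terms give
`∑ᵢ |xᵢ^{1/qᵢ} - yᵢ^{1/qᵢ}|`, while column diagonal dominance makes the matrix terms
nonnegative, so all nonlinear differences vanish.

Existence is variational: the nonnegative subsolutions `vᵢ^{1/qᵢ} + (𝕄 v)ᵢ ≤ aᵢ` form a compact
set (the column sums of `𝕄` are nonnegative, so summing the rows bounds `∑ᵢ vᵢ^{1/qᵢ}` by
`∑ᵢ aᵢ`), and a maximiser of `∑ᵢ vᵢ` on it solves every equation: in a strict row `i` one may
raise `vᵢ` a little, which keeps row `i` strict by continuity and only decreases the other rows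
since `𝕄ⱼᵢ ≤ 0`. A zero component is impossible, as its row would read
`∑_{j ≠ i} 𝕄ᵢⱼ vⱼ = aᵢ > 0`.
-/

open Finset Matrix Filter Topology SignType

theorem StrictMonoOn.sign_sub_mul_sub_eq_abs {f : ℝ → ℝ} {S : Set ℝ} (hf : StrictMonoOn f S)
    {x y : ℝ} (hx : x ∈ S) (hy : y ∈ S) : (sign (x - y) : ℝ) * (f x - f y) = |f x - f y| := by
  rcases lt_trichotomy x y with hxy | rfl | hxy
  · rw [sign_neg (sub_neg.2 hxy), abs_of_neg (sub_neg.2 (hf hx hy hxy))]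
    simp
  · simp
  · rw [sign_pos (sub_pos.2 hxy), abs_of_pos (sub_pos.2 (hf hy hx hxy))]
    simp

theorem abs_sign_le_one {α : Type*} [Ring α] [LinearOrder α] [IsStrictOrderedRing α] (x : α) :
    |(sign x : α)| ≤ 1 := by
  rcases lt_trichotomy x 0 with hx | rfl | hx <;> simp [*]

namespace Matrix

variable {ι : Type*} [Fintype ι] {M : Matrix ι ι ℝ} {f : ι → ℝ → ℝ} {a : ι → ℝ}

theorem pos_of_add_mulVec_eq (hf0 : ∀ i, f i 0 = 0) (hoff : ∀ i j, i ≠ j → M i j ≤ 0)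
    (ha : ∀ i, 0 < a i) {v : ι → ℝ} (hv0 : 0 ≤ v) (hv : (fun i => f i (v i)) + M *ᵥ v = a)
    (i : ι) : 0 < v i := by
  by_contra hle
  have hvi : v i = 0 := le_antisymm (not_lt.1 hle) (hv0 i)
  refine (ha i).not_ge ?_
  have hrow : ∑ j, M i j * v j ≤ 0 := sum_nonpos fun j _ => by
    rcases eq_or_ne j i with rfl | hji
    · simp [hvi]
    · exact mul_nonpos_of_nonpos_of_nonneg (hoff i j hji.symm) (hv0 j)
  calc a i = f i (v i) + ∑ j, M i j * v j := (congrFun hv i).symm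
    _ ≤ 0 := by rw [hvi, hf0, zero_add]; exact hrow

variable [DecidableEq ι]

def IsColDiagDominant (M : Matrix ι ι ℝ) : Prop :=
  ∀ j, ∑ i ∈ univ.erase j, |M i j| ≤ M j j

theorem IsColDiagDominant.sum_mul_mulVec_nonneg (hM : M.IsColDiagDominant) {s w : ι → ℝ}
    (hs : ∀ i, |s i| ≤ 1) (hsw : ∀ j, s j * w j = |w j|) :
    0 ≤ ∑ i, s i * (M *ᵥ w) i := by
  have hcol : ∀ j, 0 ≤ ∑ i, s i * M i j * w j := by
    intro j
    have hentry : ∀ i, -(|M i j| * |w j|) ≤ s i * M i j * w j := fun i => by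
      refine neg_le_of_abs_le ?_
      rw [abs_mul, abs_mul, mul_assoc]
      exact mul_le_of_le_one_left (by positivity) (hs i)
    calc 0 ≤ |w j| * (M j j - ∑ i ∈ univ.erase j, |M i j|) :=
          mul_nonneg (abs_nonneg _) (sub_nonneg.2 (hM j))
      _ = s j * M j j * w j + ∑ i ∈ univ.erase j, -(|M i j| * |w j|) := by
          rw [← hsw j, sum_neg_distrib, ← sum_mul]; ring
      _ ≤ s j * M j j * w j + ∑ i ∈ univ.erase j, s i * M i j * w j := by
          gcongr with i; exact hentry i
      _ = ∑ i, s i * M i j * w j := add_sum_erase _ (fun i => s i * M i j * w j) (mem_univ j)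
  calc 0 ≤ ∑ j, ∑ i, s i * M i j * w j := sum_nonneg fun j _ => hcol j
    _ = ∑ i, s i * (M *ᵥ w) i := by
      rw [sum_comm]; simp only [mulVec, dotProduct, mul_sum, mul_assoc]

theorem IsColDiagDominant.eq_of_add_mulVec_eq (hM : M.IsColDiagDominant) {S : Set ℝ}
    (hf : ∀ i, StrictMonoOn (f i) S) {x y : ι → ℝ} (hx : ∀ i, x i ∈ S) (hy : ∀ i, y i ∈ S)
    (h : (fun i => f i (x i)) + M *ᵥ x = (fun i => f i (y i)) + M *ᵥ y) :
    x = y := by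
  set d : ι → ℝ := fun i => f i (x i) - f i (y i)
  have hd : d = -(M *ᵥ (x - y)) := by
    rw [mulVec_sub]; funext i
    have hi := congrFun h i
    simp only [Pi.add_apply] at hi
    simp only [d, Pi.neg_apply, Pi.sub_apply]; linarith
  have hsum : ∑ i, |d i| ≤ 0 :=
    calc ∑ i, |d i| = ∑ i, (sign ((x - y) i) : ℝ) * d i :=
          sum_congr rfl fun i _ => ((hf i).sign_sub_mul_sub_eq_abs (hx i) (hy i)).symm
      _ = -∑ i, (sign ((x - y) i) : ℝ) * (M *ᵥ (x - y)) i := by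
          rw [hd, ← sum_neg_distrib]; simp only [Pi.neg_apply, mul_neg]
      _ ≤ 0 := neg_nonpos.2 <|
          hM.sum_mul_mulVec_nonneg (fun i => abs_sign_le_one _) (fun j => sign_mul_self _)
  have hd0 : ∀ i, |d i| = 0 := fun i =>
    (sum_eq_zero_iff_of_nonneg fun i _ => abs_nonneg (d i)).1
      (le_antisymm hsum (sum_nonneg fun i _ => abs_nonneg _)) i (mem_univ i)
  funext i
  exact (hf i).injOn (hx i) (hy i) (sub_eq_zero.1 (abs_eq_zero.1 (hd0 i)))

def nonnegSubsolutions (f : ι → ℝ → ℝ) (M : Matrix ι ι ℝ) (a : ι → ℝ) : Set (ι → ℝ) :=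
  {v | 0 ≤ v ∧ (fun i => f i (v i)) + M *ᵥ v ≤ a}

theorem IsColDiagDominant.isCompact_nonnegSubsolutions (hM : M.IsColDiagDominant)
    (hcont : ∀ i, Continuous (f i)) (hnonneg : ∀ i t, 0 ≤ t → 0 ≤ f i t)
    (htop : ∀ i, Tendsto (f i) atTop atTop) : IsCompact (nonnegSubsolutions f M a) := by
  have hclosed : IsClosed (nonnegSubsolutions f M a) :=
    (isClosed_le continuous_const continuous_id).inter
      (isClosed_le ((continuous_pi fun i => (hcont i).comp (continuous_apply i)).add
        (continuous_const.matrix_mulVec continuous_id)) continuous_const)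
  choose B hB using fun i => eventually_atTop.1 ((htop i).eventually_gt_atTop (∑ j, a j))
  refine (isCompact_Icc (a := 0) (b := B)).of_isClosed_subset hclosed
    fun v ⟨hv0, hv⟩ => ⟨hv0, fun i => le_of_not_gt fun hlt => ?_⟩
  have hMv : 0 ≤ ∑ j, 1 * (M *ᵥ v) j :=
    hM.sum_mul_mulVec_nonneg (fun _ => abs_one.le)
      (fun j => by rw [one_mul, abs_of_nonneg (hv0 j)])
  have hfv : f i (v i) ≤ ∑ j, a j :=
    calc f i (v i) ≤ ∑ j, f j (v j) :=
          single_le_sum (fun j _ => hnonneg j _ (hv0 j)) (mem_univ i)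
      _ ≤ ∑ j, (f j (v j) + (M *ᵥ v) j) := by
          rw [sum_add_distrib]; simp only [one_mul] at hMv; linarith
      _ ≤ ∑ j, a j := sum_le_sum fun j _ => hv j
  exact (hB i (v i) hlt.le).not_ge hfv

theorem add_mulVec_eq_of_isMaxOn_nonnegSubsolutions (hcont : ∀ i, Continuous (f i))
    (hoff : ∀ i j, i ≠ j → M i j ≤ 0) {v : ι → ℝ} (hv : v ∈ nonnegSubsolutions f M a)
    (hmax : IsMaxOn (fun v => ∑ i, v i) (nonnegSubsolutions f M a) v) :
    (fun i => f i (v i)) + M *ᵥ v = a := by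
  refine le_antisymm hv.2 fun i => le_of_not_gt fun hlt => ?_
  have hbump : ∀ ε j, (M *ᵥ (v + Pi.single i ε)) j = (M *ᵥ v) j + M j i * ε := by
    intro ε j; simp [mulVec_add, mul_comm]
  have hrow : Continuous fun ε => f i (v i + ε) + ((M *ᵥ v) i + M i i * ε) := by fun_prop
  have hnear : ∀ᶠ ε in 𝓝[>] 0, f i (v i + ε) + ((M *ᵥ v) i + M i i * ε) < a i :=
    nhdsWithin_le_nhds <|
      hrow.continuousAt.eventually_lt continuousAt_const (by simpa using hlt)
  obtain ⟨ε, hεrow, hε⟩ := (hnear.and self_mem_nhdsWithin).exists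
  have hmem : v + Pi.single i ε ∈ nonnegSubsolutions f M a := by
    refine ⟨add_nonneg hv.1 (Pi.single_nonneg.2 hε.le), fun j => ?_⟩
    simp only [Pi.add_apply, hbump]
    rcases eq_or_ne j i with rfl | hji
    · simpa using hεrow.le
    · have hvj : f j (v j) + (M *ᵥ v) j ≤ a j := hv.2 j
      have hMji := mul_nonpos_of_nonpos_of_nonneg (hoff j i hji) hε.le
      simp only [Pi.single_eq_of_ne hji, add_zero]
      linarith
  have hsum : ∑ j, (v + Pi.single i ε : ι → ℝ) j ≤ ∑ j, v j := hmax hmem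
  simp only [Pi.add_apply, sum_add_distrib, sum_pi_single', mem_univ, if_true] at hsum
  linarith

theorem IsColDiagDominant.exists_pos_add_mulVec_eq (hM : M.IsColDiagDominant)
    (hoff : ∀ i j, i ≠ j → M i j ≤ 0) (hcont : ∀ i, Continuous (f i))
    (hnonneg : ∀ i t, 0 ≤ t → 0 ≤ f i t) (hf0 : ∀ i, f i 0 = 0)
    (htop : ∀ i, Tendsto (f i) atTop atTop) (ha : ∀ i, 0 < a i) :
    ∃ v : ι → ℝ, (∀ i, 0 < v i) ∧ (fun i => f i (v i)) + M *ᵥ v = a := by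
  have hzero : (0 : ι → ℝ) ∈ nonnegSubsolutions f M a :=
    ⟨le_rfl, fun i => by simp [hf0, (ha i).le]⟩
  obtain ⟨v, hvS, hmax⟩ := (hM.isCompact_nonnegSubsolutions hcont hnonneg htop).exists_isMaxOn
    ⟨0, hzero⟩ (continuous_finsetSum univ fun i _ => continuous_apply i).continuousOn
  have hv := add_mulVec_eq_of_isMaxOn_nonnegSubsolutions hcont hoff hvS hmax
  exact ⟨v, pos_of_add_mulVec_eq hf0 hoff ha hvS.1 hv, hv⟩

end Matrix

theorem single_reactant_patankar_positivity_general (N : ℕ) (M : Matrix (Fin N) (Fin N) ℝ)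
    (a q : Fin N → ℝ) (ha : ∀ i, 0 < a i) (hq : ∀ i, 0 < q i)
    (hoff : ∀ i j, i ≠ j → M i j ≤ 0)
    (hdom : ∀ i, ∑ j ∈ Finset.univ.filter (fun j => j ≠ i), |M j i| ≤ M i i) :
    ∃! v : Fin N → ℝ,
      (∀ i, 0 < v i) ∧
        ∀ i, (v i) ^ (1 / q i) + ∑ j, M i j * v j = a i := by
  have hp : ∀ i, 0 < 1 / q i := fun i => one_div_pos.2 (hq i)
  have hM : M.IsColDiagDominant := fun j => by simpa only [filter_ne'] using hdom j
  have hsys : ∀ v : Fin N → ℝ, (∀ i, v i ^ (1 / q i) + ∑ j, M i j * v j = a i) ↔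
      (fun i => v i ^ (1 / q i)) + M *ᵥ v = a := fun _ => funext_iff.symm
  obtain ⟨v, hv0, hv⟩ := hM.exists_pos_add_mulVec_eq hoff
    (fun i => Real.continuous_rpow_const (hp i).le) (fun _ _ ht => Real.rpow_nonneg ht _)
    (fun i => Real.zero_rpow (hp i).ne') (fun i => tendsto_rpow_atTop (hp i)) ha
  refine ⟨v, ⟨hv0, (hsys v).2 hv⟩, fun w ⟨hw0, hw⟩ => ?_⟩
  exact hM.eq_of_add_mulVec_eq (fun i => Real.strictMonoOn_rpow_Ici_of_exponent_pos (hp i))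
    (fun i => (hw0 i).le) (fun i => (hv0 i).le) (((hsys w).1 hw).trans hv.symm)

/-- Positivity for the single-reactant Patankar system: the system
`v_i^(1/q_i) + Σ_j 𝕄_{ij} v_j = a_i` with a column diagonally dominant
M-matrix `𝕄` and positive right-hand side has a unique positive solution. -/
theorem single_reactant_patankar_positivity (N : ℕ) (M : Matrix (Fin N) (Fin N) ℝ)
    (a q : Fin N → ℝ) (ha : ∀ i, 0 < a i) (hq : ∀ i, 0 < q i)
    (hdiag : ∀ i, 0 ≤ M i i)
    (hoff : ∀ i j, i ≠ j → M i j ≤ 0)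
    (hdom : ∀ i, ∑ j ∈ Finset.univ.filter (fun j => j ≠ i), |M j i| ≤ M i i) :
    ∃! v : Fin N → ℝ,
      (∀ i, 0 < v i) ∧
        ∀ i, (v i) ^ (1 / q i) + ∑ j, M i j * v j = a i :=
  single_reactant_patankar_positivity_general N M a q ha hq hoff hdom
end

section
/- Let g(t) = t and h(t) = √((A_2 + B_2 t)(A_3 + B_3 t)) where A_2, A_3 > 0, B_2 < 0, and B_3 ∈ ℝ. Then on the set S = {t > 0 : A_2 + B_2 t > 0 and A_3 + B_3 t > 0}, the equation g(t) = h(t) has exactly one solution. -/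
/-!
On `t > 0` the equation reads `t² = (A₂ + B₂ t)(A₃ + B₃ t)`, i.e.
`(A₂/t + B₂)(A₃/t + B₃) = 1`. Where both factors are positive, the left side is a product of
two positive, strictly decreasing functions of `t`, so there is at most one solution.
One exists by the intermediate value theorem for `t² - (A₂ + B₂ t)(A₃ + B₃ t)` on
`[0, -A₂/B₂]`: it is negative at `0` and positive at `-A₂/B₂`, where the first factor vanishes;
at the root the first factor is positive, hence so is the second.
-/

open Set

theorem StrictAntiOn.mul_of_pos {α β : Type*} [Preorder α] [Semiring β] [PartialOrder β]
    [IsStrictOrderedRing β] {f g : α → β} {s : Set α} (hf : StrictAntiOn f s)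
    (hg : StrictAntiOn g s) (hf₀ : ∀ x ∈ s, 0 < f x) (hg₀ : ∀ x ∈ s, 0 < g x) :
    StrictAntiOn (fun x => f x * g x) s := fun _ hx _ hy hxy =>
  mul_lt_mul'' (hf hx hy hxy) (hg hx hy hxy) (hf₀ _ hy).le (hg₀ _ hy).le

theorem strictAntiOn_add_mul_div_self {a : ℝ} (ha : 0 < a) (b : ℝ) :
    StrictAntiOn (fun t => (a + b * t) / t) (Ioi 0) := by
  intro s hs t ht hst
  simp only [add_div, mul_div_cancel_right₀ b ht.ne', mul_div_cancel_right₀ b hs.ne']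
  gcongr

theorem div_mul_div_self_eq_one_iff {a b t : ℝ} (ht : t ≠ 0) :
    a / t * (b / t) = 1 ↔ t * t = a * b := by
  rw [div_mul_div_comm, div_eq_one_iff_eq (mul_self_ne_zero.2 ht), eq_comm]

section

variable {A₂ A₃ B₂ : ℝ}

theorem exists_mul_self_eq_mul_of_pos (hA₂ : 0 < A₂) (hA₃ : 0 < A₃) (hB₂ : B₂ < 0) (B₃ : ℝ) :
    ∃ t, (0 < t ∧ 0 < A₂ + B₂ * t ∧ 0 < A₃ + B₃ * t) ∧
      t * t = (A₂ + B₂ * t) * (A₃ + B₃ * t) := by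
  set f : ℝ → ℝ := fun t => t * t - (A₂ + B₂ * t) * (A₃ + B₃ * t)
  set T := -A₂ / B₂
  have hT : 0 < T := div_pos_of_neg_of_neg (neg_neg_of_pos hA₂) hB₂
  have hT₂ : A₂ + B₂ * T = 0 := by rw [mul_div_cancel₀ _ hB₂.ne]; ring
  have hf0 : f 0 < 0 := by simp only [f]; nlinarith
  have hfT : 0 < f T := by simp only [f, hT₂]; nlinarith
  obtain ⟨t, ⟨ht, htT⟩, hft⟩ :=
    intermediate_value_Ioo hT.le (by fun_prop : Continuous f).continuousOn ⟨hf0, hfT⟩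
  have hfix : t * t = (A₂ + B₂ * t) * (A₃ + B₃ * t) := sub_eq_zero.1 hft
  have h₂ : 0 < A₂ + B₂ * t := by nlinarith
  have h₃ : 0 < A₃ + B₃ * t := pos_of_mul_pos_right (hfix ▸ mul_pos ht ht) h₂.le
  exact ⟨t, ⟨ht, h₂, h₃⟩, hfix⟩

theorem eq_of_mul_self_eq_mul (hA₂ : 0 < A₂) (hA₃ : 0 < A₃) {B₃ s t : ℝ}
    (hs : 0 < s ∧ 0 < A₂ + B₂ * s ∧ 0 < A₃ + B₃ * s)
    (ht : 0 < t ∧ 0 < A₂ + B₂ * t ∧ 0 < A₃ + B₃ * t)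
    (hs' : s * s = (A₂ + B₂ * s) * (A₃ + B₃ * s)) (ht' : t * t = (A₂ + B₂ * t) * (A₃ + B₃ * t)) :
    s = t := by
  have hanti : StrictAntiOn (fun t => (A₂ + B₂ * t) / t * ((A₃ + B₃ * t) / t))
      {t | 0 < t ∧ 0 < A₂ + B₂ * t ∧ 0 < A₃ + B₃ * t} :=
    ((strictAntiOn_add_mul_div_self hA₂ B₂).mono fun _ h => h.1).mul_of_pos
      ((strictAntiOn_add_mul_div_self hA₃ B₃).mono fun _ h => h.1)
      (fun _ h => div_pos h.2.1 h.1) (fun _ h => div_pos h.2.2 h.1)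
  exact hanti.injOn hs ht <| ((div_mul_div_self_eq_one_iff hs.1.ne').2 hs').trans
    ((div_mul_div_self_eq_one_iff ht.1.ne').2 ht').symm

end

/-- For `A₂, A₃ > 0`, `B₂ < 0` and any `B₃`, the fixed-point equation
`t = √((A₂ + B₂ t)(A₃ + B₃ t))` has exactly one solution on the set
`S = {t > 0 : A₂ + B₂ t > 0 ∧ A₃ + B₃ t > 0}`. -/
theorem sqrt_fixed_point_unique (A2 A3 B2 B3 : ℝ)
    (hA2 : 0 < A2) (hA3 : 0 < A3) (hB2 : B2 < 0) :
    ∃! t : ℝ,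
      0 < t ∧ 0 < A2 + B2 * t ∧ 0 < A3 + B3 * t ∧
        t = Real.sqrt ((A2 + B2 * t) * (A3 + B3 * t)) := by
  have fixed_iff (t : ℝ) (ht : 0 < t) :
      t = √((A2 + B2 * t) * (A3 + B3 * t)) ↔ t * t = (A2 + B2 * t) * (A3 + B3 * t) :=
    eq_comm.trans (Real.sqrt_eq_iff_mul_self_eq_of_pos ht)
  obtain ⟨t₀, ⟨ht₀, ht₀₂, ht₀₃⟩, hfix₀⟩ := exists_mul_self_eq_mul_of_pos hA2 hA3 hB2 B3
  refine ⟨t₀, ⟨ht₀, ht₀₂, ht₀₃, (fixed_iff t₀ ht₀).2 hfix₀⟩, ?_⟩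
  rintro t ⟨ht, ht₂, ht₃, hfix⟩
  exact eq_of_mul_self_eq_mul hA2 hA3 ⟨ht, ht₂, ht₃⟩ ⟨ht₀, ht₀₂, ht₀₃⟩ ((fixed_iff t ht).1 hfix) hfix₀
end
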